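/- Let l_n denote the number of pure λυ-terms (i.e., λ-terms in de Bruijn notation, containing no closure) of size n. Then the power series L(z) = ∑_n l_n z^n has positive radius of convergence and, for all real z > 0 in a sufficiently small neighbourhood of 0, L(z) = (1 − z − √((1 − 3z − z² − z³)/(1 − z)))/(2z). -/

import Mathlib

mutual
/-- λυ-terms in de Bruijn notation, with explicit closures. -/
inductive LTerm : Type
  | idx : Nat → LTerm
  | lam : LTerm → LTerm
  | app : LTerm → LTerm → LTerm
  | clos : LTerm → LSub → LTerm
  deriving DecidableEq

/-- explicit λυ-substitutions. -/
inductive LSub : Type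
  | slash : LTerm → LSub
  | lift : LSub → LSub
  | shift : LSub
  deriving DecidableEq
end

mutual
/-- natural size of a λυ-term: the number of constructors (|idx n| = n+1). -/
def LTerm.size : LTerm → Nat
  | .idx n => n + 1
  | .lam a => 1 + a.size
  | .app a b => 1 + a.size + b.size
  | .clos a s => 1 + a.size + s.size

/-- natural size of a substitution. -/
def LSub.size : LSub → Nat
  | .slash a => 1 + a.size
  | .lift s => 1 + s.size
  | .shift => 1
end

/-- a λυ-term is pure if it contains no closure; pure terms are exactly the ψ-normal forms. -/
def LTerm.IsPure : LTerm → Prop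
  | .idx _ => True
  | .lam a => a.IsPure
  | .app a b => a.IsPure ∧ b.IsPure
  | .clos _ _ => False

/-- one normal-order (leftmost-outermost) ψ-reduction step. -/
inductive NStep : LTerm → LTerm → Prop
  /-- (App) (ab)[s] → a[s](b[s]) -/
  | appS (a b : LTerm) (s : LSub) :
      NStep (.clos (.app a b) s) (.app (.clos a s) (.clos b s))
  /-- (Lambda) (λa)[s] → λ(a[⇑(s)]) -/
  | lamS (a : LTerm) (s : LSub) :
      NStep (.clos (.lam a) s) (.lam (.clos a (.lift s)))
  /-- (FVar) 0[a/] → a -/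
  | fvar (a : LTerm) : NStep (.clos (.idx 0) (.slash a)) a
  /-- (RVar) (S n)[a/] → n -/
  | rvar (n : Nat) (a : LTerm) : NStep (.clos (.idx (n+1)) (.slash a)) (.idx n)
  /-- (FVarLift) 0[⇑(s)] → 0 -/
  | fvarLift (s : LSub) : NStep (.clos (.idx 0) (.lift s)) (.idx 0)
  /-- (RVarLift) (S n)[⇑(s)] → n[s][↑] -/
  | rvarLift (n : Nat) (s : LSub) :
      NStep (.clos (.idx (n+1)) (.lift s)) (.clos (.clos (.idx n) s) .shift)
  /-- (VarShift) n[↑] → S n -/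
  | varShift (n : Nat) : NStep (.clos (.idx n) .shift) (.idx (n+1))
  /-- reduce under an abstraction -/
  | lamCong {a a' : LTerm} : NStep a a' → NStep (.lam a) (.lam a')
  /-- reduce in the left part of an application -/
  | appLeft {a a' : LTerm} (b : LTerm) : NStep a a' → NStep (.app a b) (.app a' b)
  /-- reduce in the right part of an application, provided the left part is normal -/
  | appRight {b b' : LTerm} (a : LTerm) :
      a.IsPure → NStep b b' → NStep (.app a b) (.app a b')
  /-- reduce in the body of a closure, provided the closure is not itself a ψ-redex,
      i.e. its body is again a closure -/
  | closCong {t t' : LTerm} (s : LSub) :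
      (∃ u v, t = LTerm.clos u v) → NStep t t' → NStep (.clos t s) (.clos t' s)

/-- `NormIn t k` : `t` reaches its ψ-normal form in exactly `k` normal-order
ψ-reduction steps (written t ↓_k). -/
inductive NormIn : LTerm → Nat → Prop
  | base {t : LTerm} : t.IsPure → NormIn t 0
  | step {t t' : LTerm} {k : Nat} : NStep t t' → NormIn t' k → NormIn t (k+1)

/-- the number of pure λυ-terms (λ-terms in de Bruijn notation, i.e. ψ-normal
forms) of size n. -/
noncomputable def pureCount (n : Nat) : Nat :=
  Nat.card {t : LTerm // t.IsPure ∧ t.size = n}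

/-!
Sorting a pure term of size `n + 1` by its head constructor (index `n`, abstraction,
application) gives `l (n+1) = 1 + l n + ∑_{k ≤ n} l k * l (n - k)` with `l 0 = 0`, so the sum `L`
of the series satisfies `L = z / (1 - z) + z L + z L²`. Comparing with `3ⁿ` times the Catalan
numbers gives `l n ≤ 12ⁿ`, hence convergence for `z < 1/12`, and `L ≤ 2` for `z < 1/24`, which
singles out the root with the minus sign.
-/

open Finset

lemma LTerm.one_le_size (t : LTerm) : 1 ≤ t.size := by
  cases t <;> simp only [LTerm.size] <;> omega

abbrev PureOfSize (n : ℕ) : Type := {t : LTerm // t.IsPure ∧ t.size = n}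

namespace PureOfSize

instance : IsEmpty (PureOfSize 0) :=
  ⟨fun t => absurd t.2.2 (Nat.one_le_iff_ne_zero.mp t.1.one_le_size)⟩

def assemble (n : ℕ) :
    Unit ⊕ PureOfSize n ⊕ (Σ k : Fin (n + 1), PureOfSize k × PureOfSize (n - k)) →
      PureOfSize (n + 1)
  | .inl () => ⟨.idx n, trivial, rfl⟩
  | .inr (.inl a) => ⟨.lam a.1, a.2.1, by simp only [LTerm.size, a.2.2]; omega⟩
  | .inr (.inr ⟨k, a, b⟩) =>
      ⟨.app a.1 b.1, ⟨a.2.1, b.2.1⟩, by simp only [LTerm.size, a.2.2, b.2.2]; omega⟩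

lemma assemble_injective (n : ℕ) : Function.Injective (assemble n) := by
  rintro (⟨⟩ | a | ⟨k, a, b⟩) (⟨⟩ | a' | ⟨k', a', b'⟩) h <;>
    simp only [assemble, Subtype.mk.injEq, LTerm.lam.injEq, LTerm.app.injEq,
      reduceCtorEq] at h
  · rfl
  · rw [Subtype.ext h]
  · obtain ⟨ha, hb⟩ := h
    obtain rfl : k = k' := Fin.ext (a.2.2.symm.trans (ha ▸ a'.2.2))
    rw [Subtype.ext ha, Subtype.ext hb]

lemma assemble_surjective (n : ℕ) : Function.Surjective (assemble n) := by
  rintro ⟨t, hpure, hsize⟩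
  cases t with
  | idx m =>
    obtain rfl : m = n := by simp only [LTerm.size] at hsize; omega
    exact ⟨.inl (), rfl⟩
  | lam a =>
    exact ⟨.inr (.inl ⟨a, hpure, by simp only [LTerm.size] at hsize; omega⟩), rfl⟩
  | app a b =>
    have hb := b.one_le_size
    simp only [LTerm.size] at hsize
    have hbsize : b.size = n - a.size := by omega
    exact ⟨.inr (.inr ⟨⟨a.size, by omega⟩, ⟨a, hpure.1, rfl⟩, ⟨b, hpure.2, hbsize⟩⟩), rfl⟩
  | clos a s => exact hpure.elim

instance finite (n : ℕ) : Finite (PureOfSize n) := by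
  induction n using Nat.strong_induction_on with
  | _ n ih =>
    cases n with
    | zero => infer_instance
    | succ n =>
      have := ih n n.lt_succ_self
      have (k : Fin (n + 1)) : Finite (PureOfSize k × PureOfSize (n - k)) :=
        have := ih k (by omega)
        have := ih (n - k) (by omega)
        inferInstance
      exact Finite.of_surjective _ (assemble_surjective n)

end PureOfSize

lemma pureCount_zero : pureCount 0 = 0 :=
  Nat.card_of_isEmpty (α := PureOfSize 0)

lemma pureCount_succ (n : ℕ) :
    pureCount (n + 1) =
      1 + pureCount n + ∑ k ∈ range (n + 1), pureCount k * pureCount (n - k) := by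
  change Nat.card (PureOfSize (n + 1)) = _
  rw [← Nat.card_eq_of_bijective _
      ⟨PureOfSize.assemble_injective n, PureOfSize.assemble_surjective n⟩,
    Nat.card_sum, Nat.card_sum, Nat.card_unique, Nat.card_sigma, sum_range]
  simp only [Nat.card_prod, pureCount, add_assoc]

lemma catalan_le_catalan_succ (n : ℕ) : catalan n ≤ catalan (n + 1) := by
  rw [catalan_succ]
  simpa using single_le_sum (f := fun i : Fin (n + 1) => catalan i * catalan (n - i))
    (fun _ _ => Nat.zero_le _) (mem_univ 0)

lemma one_le_catalan : ∀ n, 1 ≤ catalan n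
  | 0 => catalan_zero.ge
  | n + 1 => (one_le_catalan n).trans (catalan_le_catalan_succ n)

lemma catalan_le_four_pow (n : ℕ) : catalan n ≤ 4 ^ n :=
  (catalan_eq_centralBinom_div n ▸ Nat.div_le_self _ _).trans (Nat.centralBinom_le_four_pow n)

lemma le_catalan_mul_three_pow {a : ℕ → ℕ} (h0 : a 0 = 0)
    (hsucc : ∀ n, a (n + 1) = 1 + a n + ∑ k ∈ range (n + 1), a k * a (n - k)) (n : ℕ) :
    a n ≤ catalan n * 3 ^ n := by
  induction n using Nat.strong_induction_on with
  | _ n ih =>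
    cases n with
    | zero => simp [h0]
    | succ n =>
      have hconv : ∑ k ∈ range (n + 1), a k * a (n - k) ≤ catalan (n + 1) * 3 ^ n := by
        rw [catalan_succ, ← sum_range (fun k => catalan k * catalan (n - k)), sum_mul]
        refine sum_le_sum fun k hk => ?_
        have hk : k ≤ n := Nat.lt_succ_iff.mp (mem_range.mp hk)
        calc a k * a (n - k) ≤ catalan k * 3 ^ k * (catalan (n - k) * 3 ^ (n - k)) :=
              Nat.mul_le_mul (ih k (by omega)) (ih (n - k) (by omega))
          _ = catalan k * catalan (n - k) * 3 ^ n := by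
              rw [mul_mul_mul_comm, ← pow_add, Nat.add_sub_cancel' hk]
      have hprev : a n ≤ catalan (n + 1) * 3 ^ n :=
        (ih n n.lt_succ_self).trans (Nat.mul_le_mul_right _ (catalan_le_catalan_succ n))
      have hone : 1 ≤ catalan (n + 1) * 3 ^ n :=
        Nat.mul_pos (one_le_catalan _) (by positivity)
      rw [hsucc, pow_succ, ← mul_assoc]
      linarith

lemma le_twelve_pow {a : ℕ → ℕ} (h0 : a 0 = 0)
    (hsucc : ∀ n, a (n + 1) = 1 + a n + ∑ k ∈ range (n + 1), a k * a (n - k)) (n : ℕ) :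
    a n ≤ 12 ^ n :=
  calc a n ≤ catalan n * 3 ^ n := le_catalan_mul_three_pow h0 hsucc n
    _ ≤ 4 ^ n * 3 ^ n := Nat.mul_le_mul_right _ (catalan_le_four_pow n)
    _ = 12 ^ n := by rw [← mul_pow]; norm_num

lemma exists_hasSum_le_of_le_pow {a : ℕ → ℕ} {c : ℕ} (ha : ∀ n, a n ≤ c ^ n) {z : ℝ}
    (hz : 0 ≤ z) (hcz : c * z < 1) :
    ∃ L, HasSum (fun n => (a n : ℝ) * z ^ n) L ∧ L ≤ (1 - c * z)⁻¹ := by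
  have hle (n : ℕ) : (a n : ℝ) * z ^ n ≤ (c * z) ^ n := by
    rw [mul_pow]
    gcongr
    exact_mod_cast ha n
  have hgeom := hasSum_geometric_of_lt_one (by positivity) hcz
  have hsum := hgeom.summable.of_nonneg_of_le (fun n => by positivity) hle
  exact ⟨_, hsum.hasSum, hasSum_le hle hsum.hasSum hgeom⟩

lemma hasSum_eq_quadratic {a : ℕ → ℕ} (h0 : a 0 = 0)
    (hsucc : ∀ n, a (n + 1) = 1 + a n + ∑ k ∈ range (n + 1), a k * a (n - k)) {z L : ℝ}
    (hz0 : 0 ≤ z) (hz1 : z < 1) (hL : HasSum (fun n => (a n : ℝ) * z ^ n) L) :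
    L = z * (1 - z)⁻¹ + z * L + z * L ^ 2 := by
  have hshift : HasSum (fun n => (a (n + 1) : ℝ) * z ^ (n + 1)) L := by
    rw [hasSum_nat_add_iff (f := fun n => (a n : ℝ) * z ^ n) 1]
    simpa [h0] using hL
  have hgeom : HasSum (fun n => z ^ (n + 1)) (z * (1 - z)⁻¹) := by
    simpa only [pow_succ'] using (hasSum_geometric_of_lt_one hz0 hz1).mul_left z
  have hcauchy : HasSum
      (fun n => ∑ k ∈ range (n + 1), (a k : ℝ) * z ^ k * (a (n - k) * z ^ (n - k))) (L ^ 2) := by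
    have hnorm := summable_norm_iff.mpr hL.summable
    simpa only [hL.tsum_eq, sq] using hasSum_sum_range_mul_of_summable_norm hnorm hnorm
  have hrhs := (hgeom.add (hL.mul_left z)).add (hcauchy.mul_left z)
  refine hshift.unique (hrhs.congr_fun fun n => ?_)
  have hconv : ∑ k ∈ range (n + 1), (a k : ℝ) * z ^ k * (a (n - k) * z ^ (n - k)) =
      (∑ k ∈ range (n + 1), (a k : ℝ) * a (n - k)) * z ^ n := by
    rw [sum_mul]
    refine sum_congr rfl fun k hk => ?_
    rw [mul_mul_mul_comm, ← pow_add, Nat.add_sub_cancel' (Nat.lt_succ_iff.mp (mem_range.mp hk))]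
  rw [hconv, hsucc]
  push_cast
  ring

/-- `(1 - z - 2 z L)² = (1 - 3z - z² - z³) / (1 - z)` is the discriminant of the quadratic
`hquad`, and `hsmall` selects its smaller root. -/
lemma closedForm_eq_of_quadratic {z L : ℝ} (hz : 0 < z) (hz1 : z < 1)
    (hquad : L = z * (1 - z)⁻¹ + z * L + z * L ^ 2) (hsmall : 2 * z * L ≤ 1 - z) :
    (1 - z - √((1 - 3 * z - z ^ 2 - z ^ 3) / (1 - z))) / (2 * z) = L := by
  have h1z : 1 - z ≠ 0 := by linarith
  have hdisc : (1 - 3 * z - z ^ 2 - z ^ 3) / (1 - z) = (1 - z - 2 * z * L) ^ 2 := by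
    rw [div_eq_iff h1z]
    linear_combination (4 * z * (1 - z)) * hquad + 4 * z ^ 2 * mul_inv_cancel₀ h1z
  rw [hdisc, Real.sqrt_sq (by linarith)]
  field_simp
  ring

/-- The power series L(z) = ∑ l_n z^n of pure λυ-terms has positive radius of
convergence and, for all real z > 0 sufficiently close to 0, its sum equals
(1 − z − √((1 − 3z − z² − z³)/(1 − z)))/(2z). -/
theorem pure_generating_function :
    ∃ r : ℝ, 0 < r ∧ ∀ z : ℝ, 0 < z → z < r →
      HasSum (fun n : ℕ => (pureCount n : ℝ) * z ^ n)
        ((1 - z - Real.sqrt ((1 - 3*z - z^2 - z^3) / (1 - z))) / (2*z)) := by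
  refine ⟨1 / 24, by norm_num, fun z hz hzr => ?_⟩
  obtain ⟨L, hL, hLle⟩ := exists_hasSum_le_of_le_pow (le_twelve_pow pureCount_zero pureCount_succ)
    hz.le (by push_cast; linarith)
  have hL2 : L ≤ 2 := hLle.trans (inv_le_of_inv_le₀ (by norm_num) (by push_cast; linarith))
  have hquad := hasSum_eq_quadratic pureCount_zero pureCount_succ hz.le (by linarith) hL
  rwa [closedForm_eq_of_quadratic hz (by linarith) hquad (by nlinarith)]
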